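/- arXiv:1601.06098 — 2 statements merged into one kernel-verified Lean document; each statement's English description precedes it below -/
import Mathlib

section
/- For all relations M ⊆ A × C, N ⊆ D × B and subsets R ⊆ A, S ⊆ B: (∃_M R) ⊸ (∀_N S) = ∀_{M⊸N}(R ⊸ S) as subsets of C × D, where (R ⊸ S) = {(a,b) | a ∈ R → b ∈ S} and (M⊸N)((c,d),(a,b)) ↔ M(a,c) ∧ N(d,b). -/
def exiRel {A B : Type*} (M : A → B → Prop) (R : Set A) : Set B :=
  {b | ∃ a, M a b ∧ a ∈ R}

def allRel {A B : Type*} (M : A → B → Prop) (S : Set B) : Set A :=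
  {a | ∀ b, M a b → b ∈ S}

def impSet {A B : Type*} (R : Set A) (S : Set B) : Set (A × B) :=
  {p | p.1 ∈ R → p.2 ∈ S}

def impRel {A B C D : Type*} (M : A → C → Prop) (N : D → B → Prop) :
    C × D → A × B → Prop :=
  fun cd ab => M ab.1 cd.1 ∧ N cd.2 ab.2

theorem exi_imp_all {A B C D : Type*} (M : A → C → Prop) (N : D → B → Prop)
    (R : Set A) (S : Set B) :
    impSet (exiRel M R) (allRel N S) = allRel (impRel M N) (impSet R S) := by
  ext ⟨c, d⟩
  simp only [impSet, exiRel, allRel, impRel, Set.mem_setOf_eq]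
  constructor
  · rintro h ⟨a, b⟩ ⟨hM, hN⟩ hR
    exact h ⟨a, hM, hR⟩ b hN
  · rintro h ⟨a, hM, hR⟩ b hN
    exact h (a, b) ⟨hM, hN⟩ hR
end

section
/- In Lawvere's presheaf hyperdoctrine, Lawvere's identity predicate on a category A computes to Eq_A(a₁,a₂) = ∫^{a∈A} Hom_A(a₁,a) × Hom_A(a₂,a); consequently, for A the discrete category on a set, this coincides with the equality predicate, but for A the partial order {0 < 1} one has Eq_A(0,1) nonempty even though 0 ≠ 1 and Hom_A(1,0) = ∅. -/
open CategoryTheory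

/-- Lawvere's identity predicate in the presheaf hyperdoctrine:
the coend `∫^{a} Hom(a₁,a) × Hom(a₂,a)`, presented as a quotient of cospans. -/
def LawvereEq (A : Type*) [Category A] (a₁ a₂ : A) : Type _ :=
  Quot (fun x y : Σ a : A, (a₁ ⟶ a) × (a₂ ⟶ a) =>
    ∃ h : x.1 ⟶ y.1, x.2.1 ≫ h = y.2.1 ∧ x.2.2 ≫ h = y.2.2)

theorem lawvereEq_presheaf :
    (∀ (X : Type) (x₁ x₂ : Discrete X),
      Nonempty (LawvereEq (Discrete X) x₁ x₂) ↔ x₁ = x₂) ∧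
    Nonempty (LawvereEq Bool false true) ∧
    (false : Bool) ≠ true ∧
    IsEmpty ((true : Bool) ⟶ (false : Bool)) := by
  refine ⟨?_, ?_, by simp, ?_⟩
  · intro X x₁ x₂
    constructor
    · rintro ⟨q⟩
      obtain ⟨⟨a, f, g⟩, rfl⟩ := Quot.exists_rep q
      have h1 := Discrete.eq_of_hom f
      have h2 := Discrete.eq_of_hom g
      apply Discrete.ext
      rw [h1, h2]
    · rintro rfl
      exact ⟨Quot.mk _ ⟨x₁, 𝟙 x₁, 𝟙 x₁⟩⟩
  · exact ⟨Quot.mk _ ⟨true, homOfLE (by simp), 𝟙 true⟩⟩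
  · exact ⟨fun h => absurd (leOfHom h) (by simp)⟩
end
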